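/- Let f : ℝ → ℝ be 1-Lipschitz, m_f-piecewise linear, convex (or concave), with m_f = 2^n for some n ≥ 1. Then there exists a GroupSort neural network of grouping size 2 satisfying Assumption 1 that represents f exactly, with depth log₂(m_f) + 1 and size at most 2m_f − 1. -/

import Mathlib

open Matrix

/-- A GroupSort feedforward neural network with grouping size `k`, input dimension `d`
and real output.  `depth` is the number of affine layers (`q` in the paper), so there are
`depth - 1` hidden layers of widths `width 1, …, width (depth - 1)` (each divisible by `k`),
with `width 0 = d` (input) and `width depth = 1` (output). -/
structure GroupSortNet (k d : ℕ) where
  depth : ℕ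
  depth_pos : 1 ≤ depth
  width : ℕ → ℕ
  width_in : width 0 = d
  width_out : width depth = 1
  width_div : ∀ i, 1 ≤ i → i ≤ depth - 1 → k ∣ width i
  V : (i : ℕ) → Matrix (Fin (width (i + 1))) (Fin (width i)) ℝ
  c : (i : ℕ) → Fin (width (i + 1)) → ℝ

/-- The GroupSort activation with grouping size `k`: the coordinates are split into
consecutive groups of `k` elements and each group is sorted in decreasing order. -/
noncomputable def groupSortFun (k : ℕ) {ν : ℕ} (x : Fin ν → ℝ) : Fin ν → ℝ := fun i =>
  if hk : 0 < k then
    let grp : Fin k → ℝ := fun j =>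
      if h : ((i : ℕ) / k) * k + (j : ℕ) < ν then x ⟨((i : ℕ) / k) * k + (j : ℕ), h⟩ else 0
    (grp ∘ Tuple.sort grp)
      ⟨k - 1 - (i : ℕ) % k, lt_of_le_of_lt (Nat.sub_le _ _) (Nat.sub_lt hk Nat.one_pos)⟩
  else x i

/-- Output of the hidden layers: `post x i` is the (activated) output of layer `i`. -/
noncomputable def GroupSortNet.post {k d : ℕ} (N : GroupSortNet k d) (x : Fin d → ℝ) :
    (i : ℕ) → Fin (N.width i) → ℝ
  | 0 => fun j => x (Fin.cast N.width_in j)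
  | i + 1 => groupSortFun k (N.V i *ᵥ N.post x i + N.c i)

/-- The real-valued function computed by the network (no activation after the last
affine layer). -/
noncomputable def GroupSortNet.eval {k d : ℕ} (N : GroupSortNet k d) (x : Fin d → ℝ) : ℝ :=
  (N.V (N.depth - 1) *ᵥ N.post x (N.depth - 1) + N.c (N.depth - 1))
    ⟨0, by
      have h : N.depth - 1 + 1 = N.depth := Nat.succ_pred_eq_of_pos N.depth_pos
      rw [h, N.width_out]
      exact Nat.one_pos⟩

/-- The size of the network: the sum of the widths of the hidden layers. -/
def GroupSortNet.size {k d : ℕ} (N : GroupSortNet k d) : ℕ :=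
  ∑ i ∈ Finset.Icc 1 (N.depth - 1), N.width i

/-- Assumption 1: `‖V₁‖_{2,∞} ≤ 1` (every row of `V₁` has Euclidean norm at most `1`),
`‖V_i‖_∞ ≤ 1` for `i = 2, …, q` (every row has `ℓ¹`-norm at most `1`), and all offsets
are bounded by some constant `K₂ ≥ 0`. -/
def GroupSortNet.Assumption1 {k d : ℕ} (N : GroupSortNet k d) : Prop :=
  (∀ r, ∑ j, (N.V 0 r j) ^ 2 ≤ 1) ∧
  (∀ i, 1 ≤ i → i < N.depth → ∀ r, ∑ j, |N.V i r j| ≤ 1) ∧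
  (∃ K₂ : ℝ, 0 ≤ K₂ ∧ ∀ i, i < N.depth → ∀ r, |N.c i r| ≤ K₂)

/-- A (possibly unbounded, possibly partly open) polyhedral set: a finite intersection of
(strict or non-strict) affine half-spaces. -/
def IsPolyhedralSet {d : ℕ} (S : Set (Fin d → ℝ)) : Prop :=
  ∃ (n : ℕ) (a : Fin n → Fin d → ℝ) (b : Fin n → ℝ) (strict : Fin n → Bool),
    S = {x | ∀ i, if strict i then ∑ j, a i j * x j < b i else ∑ j, a i j * x j ≤ b i}

/-- `f` is a continuous `m`-piecewise linear function on `ℝ^d` with pieces `Ω` and affine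
functions `x ↦ ⟨a i, x⟩ + b i`. -/
def IsPWLWith {d : ℕ} (f : (Fin d → ℝ) → ℝ) (m : ℕ)
    (Ω : Fin m → Set (Fin d → ℝ)) (a : Fin m → Fin d → ℝ) (b : Fin m → ℝ) : Prop :=
  Continuous f ∧
  (∀ i, IsPolyhedralSet (Ω i)) ∧
  (∀ i j, i ≠ j → Disjoint (Ω i) (Ω j)) ∧
  (⋃ i, Ω i) = Set.univ ∧
  (∀ i, ∀ x ∈ Ω i, f x = ∑ j, a i j * x j + b i)

/-- There is a partition of `ℝ^d` into `M` polyhedral sets, refining the partition `Ω`,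
on each of which no difference `ℓ_i - ℓ_j` of two affine pieces changes sign. -/
def IsSignRefinement {d : ℕ} (m : ℕ) (Ω : Fin m → Set (Fin d → ℝ))
    (a : Fin m → Fin d → ℝ) (b : Fin m → ℝ) (M : ℕ) : Prop :=
  ∃ Ω' : Fin M → Set (Fin d → ℝ),
    (∀ p, IsPolyhedralSet (Ω' p)) ∧
    (∀ p q, p ≠ q → Disjoint (Ω' p) (Ω' q)) ∧
    (⋃ p, Ω' p) = Set.univ ∧
    (∀ p, ∃ i, Ω' p ⊆ Ω i) ∧
    (∀ p : Fin M, ∀ i j : Fin m,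
      (∀ x ∈ Ω' p, ∑ t, a i t * x t + b i ≤ ∑ t, a j t * x t + b j) ∨
      (∀ x ∈ Ω' p, ∑ t, a j t * x t + b j ≤ ∑ t, a i t * x t + b i))

/-- `f : ℝ → ℝ` is a continuous `m`-piecewise linear function: `ℝ` is partitioned into
`m` intervals on the `i`-th of which `f x = a i * x + b i`. -/
def IsPWLRealWith (f : ℝ → ℝ) (m : ℕ) (I : Fin m → Set ℝ) (a b : Fin m → ℝ) : Prop :=
  Continuous f ∧
  (∀ i, (I i).OrdConnected) ∧
  (∀ i j, i ≠ j → Disjoint (I i) (I j)) ∧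
  (⋃ i, I i) = Set.univ ∧
  (∀ i, ∀ x ∈ I i, f x = a i * x + b i)

def IsPWLReal (f : ℝ → ℝ) (m : ℕ) : Prop :=
  ∃ I a b, IsPWLRealWith f m I a b

/-!
A convex piecewise linear `f` is the maximum of its affine pieces (a concave one the minimum),
once the pieces living on at most one point are discarded; `1`-Lipschitz continuity bounds
their slopes by `1`. With `2 ^ n` pieces this maximum is a balanced binary tree of pairwise
maxima, and GroupSort with grouping size `2` computes the maximum (and the minimum) of each
consecutive pair. So a first layer evaluates the `2 ^ n` pieces and each further layer halves
the width by keeping one entry of every sorted pair: the widths are `2 ^ n, …, 2`, of total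
`2 ^ (n + 1) - 2`.
-/

open Set Topology

theorem Tuple.comp_sort_two {α : Type*} [LinearOrder α] (g : Fin 2 → α) :
    g (Tuple.sort g 0) = min (g 0) (g 1) ∧ g (Tuple.sort g 1) = max (g 0) (g 1) := by
  have hmono : g (Tuple.sort g 0) ≤ g (Tuple.sort g 1) := Tuple.monotone_sort g zero_le_one
  have hperm : ∀ σ : Equiv.Perm (Fin 2), σ = 1 ∨ σ = Equiv.swap 0 1 := by decide
  rcases hperm (Tuple.sort g) with h | h <;> rw [h] at hmono ⊢ <;> simp at hmono ⊢ <;>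
    simp [hmono]

theorem groupSortFun_apply_of_fin {k : ℕ} (g : Fin k → ℝ) (j : Fin k) :
    groupSortFun k g j = g (Tuple.sort g j.rev) := by
  have hk : 0 < k := j.pos
  have hgrp : (fun j' : Fin k =>
      if h : (j : ℕ) / k * k + j' < k then g ⟨(j : ℕ) / k * k + j', h⟩ else 0) = g := by
    funext j'
    simp [Nat.div_eq_of_lt j.isLt]
  have hrev : (⟨k - 1 - (j : ℕ) % k, by omega⟩ : Fin k) = j.rev := by
    ext
    simp only [Fin.val_rev, Nat.mod_eq_of_lt j.isLt]
    omega
  simp only [groupSortFun, dif_pos hk, hgrp, hrev, Function.comp_apply]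

theorem groupSortFun_block {k ν : ℕ} (y : Fin ν → ℝ) (r : ℕ) (j : Fin k)
    (h : k * r + k ≤ ν) :
    groupSortFun k y ⟨k * r + j, by omega⟩ =
      groupSortFun k (fun j' : Fin k => y ⟨k * r + j', by omega⟩) j := by
  have hk : 0 < k := j.pos
  have hdiv : (k * r + j) / k = r := by
    rw [Nat.add_comm, Nat.add_mul_div_left _ _ hk, Nat.div_eq_of_lt j.isLt, zero_add]
  have hmod : (k * r + j) % k = j := by simp [Nat.add_mod, Nat.mod_eq_of_lt j.isLt]
  have hgrp : (fun j' : Fin k => if h' : k * r + (j' : ℕ) < ν then y ⟨k * r + j', h'⟩ else 0) =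
      fun j' : Fin k => y ⟨k * r + j', by omega⟩ := by
    funext j'
    rw [dif_pos]
  simp only [groupSortFun, dif_pos hk, hdiv, hmod, Nat.div_eq_of_lt j.isLt,
    Nat.mod_eq_of_lt j.isLt, zero_mul, zero_add, Fin.is_lt, dite_true, mul_comm r k]
  rw [hgrp]

noncomputable def groupSortPair (δ : Fin 2) (a b : ℝ) : ℝ := groupSortFun 2 ![a, b] δ

theorem groupSortPair_zero : groupSortPair 0 = max := by
  funext a b
  simpa [groupSortPair, groupSortFun_apply_of_fin] using (Tuple.comp_sort_two ![a, b]).2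

theorem groupSortPair_one : groupSortPair 1 = min := by
  funext a b
  simpa [groupSortPair, groupSortFun_apply_of_fin] using (Tuple.comp_sort_two ![a, b]).1

theorem groupSortFun_two_apply {ν : ℕ} (y : Fin ν → ℝ) (r : ℕ) (δ : Fin 2)
    (h : 2 * r + 1 < ν) :
    groupSortFun 2 y ⟨2 * r + δ, by omega⟩ =
      groupSortPair δ (y ⟨2 * r, by omega⟩) (y ⟨2 * r + 1, h⟩) := by
  rw [groupSortFun_block y r δ (by omega), groupSortPair]
  congr 1
  funext j
  fin_cases j <;> rfl

def pairReduce {α : Type*} (op : α → α → α) (L : ℕ → α) (r : ℕ) : α :=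
  op (L (2 * r)) (L (2 * r + 1))

theorem isGreatest_iterate_pairReduce_max {α : Type*} [LinearOrder α] (L : ℕ → α) (s : ℕ) :
    IsGreatest (L '' Iio (2 ^ s)) ((pairReduce max)^[s] L 0) := by
  induction s generalizing L with
  | zero => simp
  | succ s ih =>
    rw [Function.iterate_succ_apply]
    obtain ⟨⟨t, ht, hmem⟩, hub⟩ := ih (pairReduce max L)
    rw [mem_Iio] at ht
    have hpow : 2 ^ (s + 1) = 2 * 2 ^ s := by ring
    refine ⟨?_, ?_⟩
    · rw [← hmem]
      rcases max_choice (L (2 * t)) (L (2 * t + 1)) with h | h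
      · exact ⟨2 * t, by rw [mem_Iio]; omega, h.symm⟩
      · exact ⟨2 * t + 1, by rw [mem_Iio]; omega, h.symm⟩
    · rintro _ ⟨u, hu, rfl⟩
      rw [mem_Iio] at hu
      refine le_trans ?_ (hub ⟨u / 2, by rw [mem_Iio]; omega, rfl⟩)
      rcases Nat.even_or_odd' u with ⟨t, rfl | rfl⟩
      · exact (congrArg L (by omega)).le.trans (le_max_left _ _)
      · exact (congrArg L (by omega)).le.trans (le_max_right _ _)

theorem isLeast_iterate_pairReduce_min {α : Type*} [LinearOrder α] (L : ℕ → α) (s : ℕ) :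
    IsLeast (L '' Iio (2 ^ s)) ((pairReduce min)^[s] L 0) :=
  isGreatest_iterate_pairReduce_max (α := αᵒᵈ) L s

theorem image_Iio_comp_ofNat {α : Type*} {m : ℕ} [NeZero m] (g : Fin m → α) :
    (fun t => g (Fin.ofNat m t)) '' Iio m = range g := by
  refine Subset.antisymm ?_ ?_
  · rintro _ ⟨t, -, rfl⟩
    exact mem_range_self _
  · rintro _ ⟨i, rfl⟩
    exact ⟨i, i.isLt, by simp only [Fin.ofNat_val_eq_self]⟩

theorem LipschitzWith.abs_le_of_eq_affine {f : ℝ → ℝ} {K : NNReal} (hf : LipschitzWith K f)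
    {a b u v : ℝ} (hu : f u = a * u + b) (hv : f v = a * v + b) (huv : u ≠ v) : |a| ≤ K := by
  have hdist := hf.dist_le_mul u v
  rw [Real.dist_eq, Real.dist_eq, hu, hv, show a * u + b - (a * v + b) = a * (u - v) by ring,
    abs_mul] at hdist
  exact le_of_mul_le_mul_right hdist (abs_pos.mpr (sub_ne_zero.mpr huv))

theorem ConvexOn.affine_le_of_eqOn_Icc {f : ℝ → ℝ} (hf : ConvexOn ℝ univ f) {a b u v : ℝ}
    (huv : u < v) (h : ∀ x ∈ Icc u v, f x = a * x + b) (x : ℝ) : a * x + b ≤ f x := by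
  have hu := h u (left_mem_Icc.mpr huv.le)
  have hv := h v (right_mem_Icc.mpr huv.le)
  have hslope : (f v - f u) / (v - u) = a := by
    rw [hu, hv, div_eq_iff (sub_ne_zero.mpr huv.ne')]
    ring
  rcases lt_or_ge x u with hxu | hux
  · have hs := hf.slope_mono_adjacent (mem_univ x) (mem_univ v) hxu huv
    rw [hslope, div_le_iff₀ (sub_pos.mpr hxu)] at hs
    linarith
  rcases le_or_gt x v with hxv | hvx
  · exact (h x ⟨hux, hxv⟩).ge
  · have hs := hf.slope_mono_adjacent (mem_univ u) (mem_univ x) huv hvx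
    rw [hslope, le_div_iff₀ (sub_pos.mpr hvx)] at hs
    linarith

theorem exists_nontrivial_mem_closure_of_iUnion_eq_univ {X ι : Type*} [TopologicalSpace X]
    [T1Space X] [∀ x : X, (𝓝[≠] x).NeBot] [Finite ι] {I : ι → Set X} (hI : ⋃ i, I i = univ)
    (x : X) : ∃ i, (I i).Nontrivial ∧ x ∈ closure (I i) := by
  have hdense : Dense (⋃ i ∈ {i | (I i).Nontrivial}, I i) := by
    refine (dense_univ.sdiff_finite (t := ⋃ i ∈ {i | ¬(I i).Nontrivial}, I i) ?_).mono ?_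
    · exact (toFinite _).biUnion fun i hi => (not_nontrivial_iff.mp hi).finite
    · rintro y ⟨-, hy⟩
      obtain ⟨i, hi⟩ := mem_iUnion.mp (hI ▸ mem_univ y : y ∈ ⋃ i, I i)
      by_cases hnt : (I i).Nontrivial
      · exact mem_biUnion hnt hi
      · exact absurd (mem_biUnion hnt hi) hy
  have hx : x ∈ closure (⋃ i ∈ {i | (I i).Nontrivial}, I i) := hdense.closure_eq ▸ mem_univ x
  rw [(toFinite _).closure_biUnion] at hx
  simpa using hx

theorem IsPWLReal.exists_isGreatest_affine {f : ℝ → ℝ} {m : ℕ} (hf : IsPWLReal f m)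
    (hlip : LipschitzWith 1 f) (hconv : ConvexOn ℝ univ f) :
    ∃ a b : Fin m → ℝ, (∀ i, |a i| ≤ 1) ∧ ∀ x, IsGreatest (range fun i => a i * x + b i) (f x) := by
  obtain ⟨I, a, b, hcont, hord, -, hcover, heq⟩ := hf
  have hpiece : ∀ i, (I i).Nontrivial → |a i| ≤ 1 ∧ ∀ x, a i * x + b i ≤ f x := by
    rintro i ⟨u, hu, v, hv, huv⟩
    refine ⟨by simpa using hlip.abs_le_of_eq_affine (heq i u hu) (heq i v hv) huv, ?_⟩
    rcases huv.lt_or_gt with h | h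
    · exact hconv.affine_le_of_eqOn_Icc h fun y hy => heq i y ((hord i).out hu hv hy)
    · exact hconv.affine_le_of_eqOn_Icc h fun y hy => heq i y ((hord i).out hv hu hy)
  have hattained : ∀ x, ∃ i, (I i).Nontrivial ∧ f x = a i * x + b i := by
    intro x
    obtain ⟨i, hi, hx⟩ := exists_nontrivial_mem_closure_of_iUnion_eq_univ hcover x
    exact ⟨i, hi, EqOn.closure (heq i) hcont (by fun_prop) hx⟩
  classical
  obtain ⟨i₀, hi₀, -⟩ := hattained 0
  let σ : Fin m → Fin m := fun i => if (I i).Nontrivial then i else i₀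
  have hσ : ∀ i, (I (σ i)).Nontrivial := fun i => by
    dsimp only [σ]
    split_ifs with h
    exacts [h, hi₀]
  refine ⟨a ∘ σ, b ∘ σ, fun i => (hpiece _ (hσ i)).1, fun x => ⟨?_, ?_⟩⟩
  · obtain ⟨i, hi, hfx⟩ := hattained x
    exact ⟨i, by simp [σ, hi, hfx]⟩
  · rintro _ ⟨i, rfl⟩
    exact (hpiece _ (hσ i)).2 x

theorem IsPWLReal.neg {f : ℝ → ℝ} {m : ℕ} (hf : IsPWLReal f m) : IsPWLReal (-f) m := by
  obtain ⟨I, a, b, hcont, hord, hdisj, hcover, heq⟩ := hf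
  exact ⟨I, -a, -b, hcont.neg, hord, hdisj, hcover, fun i x hx => by simp [heq i x hx]; ring⟩

theorem IsPWLReal.exists_isLeast_affine {f : ℝ → ℝ} {m : ℕ} (hf : IsPWLReal f m)
    (hlip : LipschitzWith 1 f) (hconc : ConcaveOn ℝ univ f) :
    ∃ a b : Fin m → ℝ, (∀ i, |a i| ≤ 1) ∧ ∀ x, IsLeast (range fun i => a i * x + b i) (f x) := by
  obtain ⟨a, b, ha, hmax⟩ := hf.neg.exists_isGreatest_affine hlip.neg hconc.neg
  refine ⟨-a, -b, by simpa using ha, fun x => ⟨?_, ?_⟩⟩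
  · obtain ⟨i, hi⟩ := (hmax x).1
    exact ⟨i, by simp only [Pi.neg_apply] at hi ⊢; linarith⟩
  · rintro _ ⟨i, rfl⟩
    have := (hmax x).2 ⟨i, rfl⟩
    simp only [Pi.neg_apply] at this ⊢
    linarith

noncomputable def GroupSortNet.preact {k d : ℕ} (N : GroupSortNet k d) (x : Fin d → ℝ) (i : ℕ) :
    Fin (N.width (i + 1)) → ℝ :=
  N.V i *ᵥ N.post x i + N.c i

theorem GroupSortNet.post_succ {k d : ℕ} (N : GroupSortNet k d) (x : Fin d → ℝ) (i : ℕ) :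
    N.post x (i + 1) = groupSortFun k (N.preact x i) := rfl

theorem sum_ite_val_eq_mul {ν : ℕ} (u : Fin ν → ℝ) (c : ℕ) (hc : c < ν) :
    ∑ j : Fin ν, (if (j : ℕ) = c then 1 else 0) * u j = u ⟨c, hc⟩ := by
  rw [Fintype.sum_eq_single ⟨c, hc⟩ fun j hj => by simp [Fin.val_ne_iff.mpr hj]]
  simp

theorem sum_Icc_two_pow_sub (n : ℕ) :
    ∑ i ∈ Finset.Icc 1 n, 2 ^ (n + 1 - i) = 2 ^ (n + 1) - 2 := by
  induction n with
  | zero => simp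
  | succ n ih =>
    have hdouble : ∑ i ∈ Finset.Icc 1 n, 2 ^ (n + 1 + 1 - i) =
        2 * ∑ i ∈ Finset.Icc 1 n, 2 ^ (n + 1 - i) := by
      rw [Finset.mul_sum]
      refine Finset.sum_congr rfl fun i hi => ?_
      rw [← pow_succ', show n + 1 + 1 - i = n + 1 - i + 1 by grind]
    have : 2 ≤ 2 ^ (n + 1) := Nat.le_self_pow (by omega) 2
    rw [Finset.sum_Icc_succ_top (by omega), hdouble, ih, Nat.add_sub_cancel_left,
      pow_succ 2 (n + 1)]
    omega

def treeWidth (n i : ℕ) : ℕ := if i = 0 then 1 else 2 ^ (n + 1 - i)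

theorem treeWidth_eq_two_mul {n i : ℕ} (h1 : 1 ≤ i) (h2 : i ≤ n) :
    treeWidth n i = 2 * treeWidth n (i + 1) := by
  simp only [treeWidth, if_neg (by omega : i ≠ 0), if_neg (by omega : i + 1 ≠ 0)]
  rw [← pow_succ']
  congr 1
  omega

/-- Layer `0` evaluates the affine maps `x ↦ A t * x + B t`, `t < 2 ^ n`; every later layer
keeps entry `δ` of each sorted pair (`δ = 0`: the maximum, `δ = 1`: the minimum). -/
noncomputable def treeNet (n : ℕ) (δ : Fin 2) (A B : ℕ → ℝ) : GroupSortNet 2 1 where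
  depth := n + 1
  depth_pos := by omega
  width := treeWidth n
  width_in := rfl
  width_out := by simp [treeWidth]
  width_div i h1 h2 := by
    rw [treeWidth, if_neg (by omega)]
    exact dvd_pow_self 2 (by omega)
  V i r j := if i = 0 then A r else if (j : ℕ) = 2 * r + δ then 1 else 0
  c i r := if i = 0 then B r else 0

section TreeNet

variable (n : ℕ) (δ : Fin 2) (A B : ℕ → ℝ)

theorem treeNet_preact (x : ℝ) :
    ∀ i ≤ n, ∀ r : Fin ((treeNet n δ A B).width (i + 1)),
      (treeNet n δ A B).preact (fun _ => x) i r
        = (pairReduce (groupSortPair δ))^[i] (fun t => A t * x + B t) r := by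
  intro i
  induction i with
  | zero =>
    intro _ r
    show ∑ _ : Fin 1, A r * x + B r = A r * x + B r
    simp
  | succ i ih =>
    intro hi r
    have hr : 2 * (r : ℕ) + 1 < (treeNet n δ A B).width (i + 1) := by
      have : (r : ℕ) < treeWidth n (i + 1 + 1) := r.isLt
      show _ < treeWidth n (i + 1)
      rw [treeWidth_eq_two_mul (by omega) hi]
      omega
    have hrow : ∀ j, (treeNet n δ A B).V (i + 1) r j = if (j : ℕ) = 2 * r + δ then 1 else 0 :=
      fun j => by simp [treeNet]
    have hc : (treeNet n δ A B).c (i + 1) r = 0 := by simp [treeNet]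
    simp only [GroupSortNet.preact, Pi.add_apply, Matrix.mulVec, dotProduct, hrow, hc, add_zero]
    rw [sum_ite_val_eq_mul _ _ (by omega), Function.iterate_succ_apply', pairReduce,
      GroupSortNet.post_succ, groupSortFun_two_apply _ _ _ hr, ih (by omega), ih (by omega)]

theorem treeNet_eval (x : ℝ) :
    (treeNet n δ A B).eval (fun _ => x) =
      (pairReduce (groupSortPair δ))^[n] (fun t => A t * x + B t) 0 :=
  treeNet_preact n δ A B x n le_rfl _

theorem treeNet_assumption1 {K : ℝ} (hA : ∀ t, |A t| ≤ 1) (hB : ∀ t, |B t| ≤ K) :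
    (treeNet n δ A B).Assumption1 := by
  refine ⟨fun r => ?_, fun i hi1 hi2 r => ?_, K, (abs_nonneg _).trans (hB 0), fun i _ r => ?_⟩
  · show ∑ _ : Fin 1, A r ^ 2 ≤ 1
    simpa [sq_le_one_iff_abs_le_one] using hA r
  · have hr : 2 * (r : ℕ) + δ < (treeNet n δ A B).width i := by
      have : (r : ℕ) < treeWidth n (i + 1) := r.isLt
      show _ < treeWidth n i
      rw [treeWidth_eq_two_mul hi1 (by simpa [treeNet] using hi2)]
      omega
    have hrow : ∀ j, |(treeNet n δ A B).V i r j| =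
        (if (j : ℕ) = 2 * r + δ then 1 else 0) * 1 := fun j => by
      simp only [treeNet, if_neg (by omega : i ≠ 0)]
      split_ifs <;> simp
    simp only [hrow]
    exact (sum_ite_val_eq_mul (fun _ => 1) _ hr).le
  · show |if i = 0 then B r else 0| ≤ K
    split_ifs
    exacts [hB r, (abs_zero (α := ℝ)).le.trans ((abs_nonneg _).trans (hB 0))]

theorem treeNet_size : (treeNet n δ A B).size = 2 ^ (n + 1) - 2 := by
  rw [← sum_Icc_two_pow_sub n]
  refine Finset.sum_congr rfl fun i hi => ?_
  simp only [treeNet, treeWidth, if_neg (by grind : i ≠ 0)]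

end TreeNet

theorem groupSortNet_represents_pwl_real_convex_pow_two_general (f : ℝ → ℝ)
    (hlip : LipschitzWith 1 f) (n : ℕ) (m : ℕ) (hm : m = 2 ^ n)
    (hf : IsPWLReal f m)
    (hconv : ConvexOn ℝ Set.univ f ∨ ConcaveOn ℝ Set.univ f) :
    ∃ N : GroupSortNet 2 1, N.Assumption1 ∧ (∀ x : ℝ, N.eval (fun _ => x) = f x) ∧
      N.depth = n + 1 ∧
      N.size ≤ 2 * m - 1 := by
  subst hm
  suffices h : ∃ (δ : Fin 2) (a b : Fin (2 ^ n) → ℝ), (∀ i, |a i| ≤ 1) ∧ ∀ x, f x =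
      (pairReduce (groupSortPair δ))^[n] (fun t => a (Fin.ofNat _ t) * x + b (Fin.ofNat _ t)) 0 by
    obtain ⟨δ, a, b, ha, hrep⟩ := h
    obtain ⟨K, hK⟩ := Finite.exists_le fun i => |b i|
    refine ⟨treeNet n δ _ _, treeNet_assumption1 n δ _ _ (fun t => ha _) (fun t => hK _),
      fun x => (treeNet_eval n δ _ _ x).trans (hrep x).symm, rfl, ?_⟩
    rw [treeNet_size, pow_succ']
    omega
  rcases hconv with hconv | hconc
  · obtain ⟨a, b, ha, hmax⟩ := hf.exists_isGreatest_affine hlip hconv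
    refine ⟨0, a, b, ha, fun x => (hmax x).unique ?_⟩
    rw [groupSortPair_zero, ← image_Iio_comp_ofNat fun i => a i * x + b i]
    exact isGreatest_iterate_pairReduce_max _ n
  · obtain ⟨a, b, ha, hmin⟩ := hf.exists_isLeast_affine hlip hconc
    refine ⟨1, a, b, ha, fun x => (hmin x).unique ?_⟩
    rw [groupSortPair_one, ← image_Iio_comp_ofNat fun i => a i * x + b i]
    exact isLeast_iterate_pairReduce_min _ n

/-- Any `1`-Lipschitz `m`-piecewise linear convex (or concave) function `f : ℝ → ℝ` with
`m = 2^n` (`n ≥ 1`) is exactly represented by a GroupSort network of grouping size `2`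
satisfying Assumption 1, with depth `log₂ m + 1 = n + 1` and size at most `2m - 1`. -/
theorem groupSortNet_represents_pwl_real_convex_pow_two (f : ℝ → ℝ)
    (hlip : LipschitzWith 1 f) (n : ℕ) (hn : 1 ≤ n) (m : ℕ) (hm : m = 2 ^ n)
    (hf : IsPWLReal f m)
    (hconv : ConvexOn ℝ Set.univ f ∨ ConcaveOn ℝ Set.univ f) :
    ∃ N : GroupSortNet 2 1, N.Assumption1 ∧ (∀ x : ℝ, N.eval (fun _ => x) = f x) ∧
      N.depth = n + 1 ∧
      N.size ≤ 2 * m - 1 :=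
  groupSortNet_represents_pwl_real_convex_pow_two_general f hlip n m hm hf hconv
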